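/- Let C_λ be the copula of the bivariate random vector X = −(V/2)(1/S₁, 1/S₂) where V has df H_λ, S₁ = U = 1 − S₂ with U uniform(0,1) independent of V, and λ ∈ [−√2/2, √2/2], λ ≠ 0. Then (1 − C_λ(F_λ(t), F_λ(t)))/(1 − F_λ(t)) = 2·∫_{1/2}^1 H_λ(|t|u) du / ∫_0^1 H_λ(|t|u) du for t ∈ (−1, 0), where F_λ is the common marginal df of −V/S₁ and −V/S₂. -/

import Mathlib

open MeasureTheory

noncomputable def Hfun (lam u : ℝ) : ℝ :=
  if u = 0 then 0 else u * (1 + lam * Real.sin (Real.log u))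

/-! Write `c = |t|`. Up to null sets, `{-V/U ≤ t} = {c U ≤ V}`,
`{-V/(1-U) ≤ t} = {c (1-U) ≤ V}`, and their intersection is `{c max(U, 1-U) ≤ V}`.
Since `H_λ` is continuous, `V` has no atoms, and independence with Fubini gives
`P(V < c g(U)) = ∫₀¹ H_λ(c g(u)) du`. Taking `g(u) = u, 1-u, max(u, 1-u)` yields
`1 - F_λ(t) = ∫₀¹ H_λ(cu) du` for both margins and
`1 - C_λ(F_λ(t), F_λ(t)) = ∫₀¹ H_λ(c max(u, 1-u)) du = 2 ∫_{1/2}^1 H_λ(cu) du`.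
The hypothesis on `C` only pins down `C` where the joint probability is positive; here it is at
least `P(V > c) = 1 - H_λ(c) > 0`, as `|λ| < 1`. -/

open Set Filter Topology ProbabilityTheory

section Hfun

variable {lam : ℝ}

lemma abs_Hfun_le (lam x : ℝ) : |Hfun lam x| ≤ |x| * (1 + |lam|) := by
  unfold Hfun
  split_ifs
  · rw [abs_zero]
    positivity
  · rw [abs_mul]
    refine mul_le_mul_of_nonneg_left ((abs_add_le _ _).trans ?_) (abs_nonneg x)
    rw [abs_one, abs_mul]
    gcongr
    exact mul_le_of_le_one_right (abs_nonneg lam) (Real.abs_sin_le_one _)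

lemma Hfun_continuous (lam : ℝ) : Continuous (Hfun lam) := by
  refine continuous_iff_continuousAt.2 fun x => ?_
  rcases eq_or_ne x 0 with rfl | hx
  · have hbound : Tendsto (fun y : ℝ => |y| * (1 + |lam|)) (𝓝 0) (𝓝 0) := by
      simpa using (show Continuous fun y : ℝ => |y| * (1 + |lam|) by fun_prop).tendsto 0
    simpa [ContinuousAt, Hfun] using
      squeeze_zero_norm (abs_Hfun_le lam) hbound
  · have hev : (fun y => y * (1 + lam * Real.sin (Real.log y))) =ᶠ[𝓝 x] Hfun lam := by
      filter_upwards [eventually_ne_nhds hx] with y hy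
      simp [Hfun, hy]
    exact ContinuousAt.congr (by fun_prop (disch := exact hx)) hev

lemma Hfun_nonneg (hlam : |lam| ≤ 1) {x : ℝ} (hx : 0 ≤ x) : 0 ≤ Hfun lam x := by
  unfold Hfun
  split_ifs with hx0
  · exact le_rfl
  · have hsin : |lam * Real.sin (Real.log x)| ≤ 1 := by
      rw [abs_mul]
      exact mul_le_one₀ hlam (abs_nonneg _) (Real.abs_sin_le_one _)
    have := (abs_le.mp hsin).1
    exact mul_nonneg hx (by linarith)

lemma Hfun_lt_one (hlam : |lam| < 1) {x : ℝ} (hx0 : 0 < x) (hx1 : x < 1) :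
    Hfun lam x < 1 := by
  have hlog : x * |Real.log x| ≤ 1 - x := by
    rw [abs_of_nonpos (Real.log_nonpos hx0.le hx1.le)]
    have := Real.one_sub_inv_le_log_of_pos hx0
    calc x * -Real.log x ≤ x * (x⁻¹ - 1) := by gcongr; linarith
      _ = 1 - x := by field_simp
  rw [Hfun, if_neg hx0.ne']
  calc x * (1 + lam * Real.sin (Real.log x))
        = x + x * (lam * Real.sin (Real.log x)) := by ring
    _ ≤ x + |lam| * (x * |Real.log x|) := by
        refine add_le_add_right ?_ x
        calc x * (lam * Real.sin (Real.log x)) ≤ |x * (lam * Real.sin (Real.log x))| :=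
              le_abs_self _
          _ = |lam| * (x * |Real.sin (Real.log x)|) := by
              rw [abs_mul, abs_mul, abs_of_pos hx0]; ring
          _ ≤ |lam| * (x * |Real.log x|) := by
              have := Real.abs_sin_le_abs (x := Real.log x)
              gcongr
    _ ≤ x + |lam| * (1 - x) := by gcongr
    _ < 1 := by nlinarith

end Hfun

lemma measure_Iio_eq_measure_Iic_of_continuousWithinAt {μ : Measure ℝ}
    [IsProbabilityMeasure μ] {a : ℝ} (h : ContinuousWithinAt (cdf μ) (Iio a) a) :
    μ (Iio a) = μ (Iic a) := by
  refine measure_congr (Iio_ae_eq_Iic' ?_)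
  rw [← measure_cdf μ, StieltjesFunction.measure_singleton,
    ((cdf μ).mono.continuousWithinAt_Iio_iff_leftLim_eq.mp h), sub_self, ENNReal.ofReal_zero]

theorem integral_comp_max_self_one_sub {f : ℝ → ℝ}
    (hf : IntervalIntegrable f volume (1 / 2) 1) :
    ∫ u in (0 : ℝ)..1, f (max u (1 - u)) = 2 * ∫ u in (1 / 2 : ℝ)..1, f u := by
  have hleft : EqOn (fun u => f (1 - u)) (fun u => f (max u (1 - u))) (uIcc 0 (1 / 2)) := by
    intro u hu
    rw [uIcc_of_le (by norm_num)] at hu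
    simp only [max_eq_right (by linarith [hu.2] : u ≤ 1 - u)]
  have hright : EqOn f (fun u => f (max u (1 - u))) (uIcc (1 / 2) 1) := by
    intro u hu
    rw [uIcc_of_le (by norm_num)] at hu
    simp only [max_eq_left (by linarith [hu.1] : 1 - u ≤ u)]
  have hf' : IntervalIntegrable (fun u => f (1 - u)) volume 0 (1 / 2) := by
    convert hf.symm.comp_sub_left 1 using 1 <;> norm_num
  rw [← intervalIntegral.integral_add_adjacent_intervals
      (hf'.congr (hleft.mono uIoc_subset_uIcc)) (hf.congr (hright.mono uIoc_subset_uIcc)),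
    ← intervalIntegral.integral_congr hleft, ← intervalIntegral.integral_congr hright,
    intervalIntegral.integral_comp_sub_left]
  norm_num
  ring

lemma neg_div_le_iff_mul_le {u v t : ℝ} (hu : 0 < u) : -v / u ≤ t ↔ -t * u ≤ v := by
  rw [div_le_iff₀ hu]
  constructor <;> intro <;> linarith

lemma neg_div_le_and_neg_div_le_iff {u w v t : ℝ} (hu : 0 < u) (hw : 0 < w) (ht : t ≤ 0) :
    (-v / u ≤ t ∧ -v / w ≤ t) ↔ -v / max u w ≤ t := by
  rw [neg_div_le_iff_mul_le hu, neg_div_le_iff_mul_le hw,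
    neg_div_le_iff_mul_le (lt_max_of_lt_left hu), mul_max_of_nonneg _ _ (neg_nonneg.2 ht),
    max_le_iff]

section Probability

variable {Ω : Type*} [MeasurableSpace Ω] {P : Measure Ω} {V U : Ω → ℝ}

lemma one_sub_toReal_measure_eq [IsProbabilityMeasure P] {E F : Set Ω} (hE : MeasurableSet E)
    (h : Eᶜ =ᵐ[P] F) : 1 - (P E).toReal = (P F).toReal := by
  rw [← measure_congr h]
  exact (probReal_compl_eq_one_sub hE).symm

lemma compl_setOf_neg_div_le_ae_eq {W : Ω → ℝ} (hW : ∀ᵐ ω ∂P, 0 < W ω) (t : ℝ) :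
    ({ω | -(V ω) / W ω ≤ t}ᶜ : Set Ω) =ᵐ[P] {ω | V ω < -t * W ω} := by
  filter_upwards [hW] with ω hω
  exact propext (show ¬(-(V ω) / W ω ≤ t) ↔ V ω < -t * W ω from
    (neg_div_le_iff_mul_le hω).not.trans not_le)

theorem measure_lt_comp_eq_lintegral_map [IsFiniteMeasure P] (hV : Measurable V)
    (hU : Measurable U) (hindep : IndepFun V U P) {g : ℝ → ℝ} (hg : Measurable g) :
    P {ω | V ω < g (U ω)} = ∫⁻ u, P {ω | V ω < g u} ∂(P.map U) := by
  have hS : MeasurableSet {p : ℝ × ℝ | p.2 < g p.1} :=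
    measurableSet_lt measurable_snd (hg.comp measurable_fst)
  have hmap : P.map (fun ω => (U ω, V ω)) = (P.map U).prod (P.map V) :=
    (indepFun_iff_map_prod_eq_prod_map_map hU.aemeasurable hV.aemeasurable).mp hindep.symm
  calc P {ω | V ω < g (U ω)} = P.map (fun ω => (U ω, V ω)) {p | p.2 < g p.1} :=
        (Measure.map_apply (hU.prodMk hV) hS).symm
    _ = ∫⁻ u, P.map V (Iio (g u)) ∂(P.map U) := by rw [hmap, Measure.prod_apply hS]; rfl
    _ = ∫⁻ u, P {ω | V ω < g u} ∂(P.map U) :=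
        lintegral_congr fun u => Measure.map_apply hV measurableSet_Iio

variable [IsProbabilityMeasure P] {lam : ℝ}

lemma measure_lt_eq_Hfun (hlam : |lam| ≤ 1) (hV : Measurable V)
    (hVlaw : ∀ u ∈ Icc (0:ℝ) 1, P {ω | V ω ≤ u} = ENNReal.ofReal (Hfun lam u))
    {x : ℝ} (hx0 : 0 < x) (hx1 : x ≤ 1) : P {ω | V ω < x} = ENNReal.ofReal (Hfun lam x) := by
  have := Measure.isProbabilityMeasure_map (μ := P) hV.aemeasurable
  have hcdf : ∀ y ∈ Icc (0:ℝ) 1, cdf (P.map V) y = Hfun lam y := fun y hy => by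
    rw [cdf_eq_real, measureReal_def, Measure.map_apply hV measurableSet_Iic]
    change (P {ω | V ω ≤ y}).toReal = _
    rw [hVlaw y hy, ENNReal.toReal_ofReal (Hfun_nonneg hlam hy.1)]
  have hcont : ContinuousWithinAt (cdf (P.map V)) (Iio x) x := by
    refine (Hfun_continuous lam).continuousAt.continuousWithinAt.congr_of_eventuallyEq ?_
      (hcdf x ⟨hx0.le, hx1⟩)
    filter_upwards [Ioo_mem_nhdsLT hx0] with y hy
    exact hcdf y ⟨hy.1.le, hy.2.le.trans hx1⟩
  calc P {ω | V ω < x} = P.map V (Iio x) := (Measure.map_apply hV measurableSet_Iio).symm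
    _ = P.map V (Iic x) := measure_Iio_eq_measure_Iic_of_continuousWithinAt hcont
    _ = P {ω | V ω ≤ x} := Measure.map_apply hV measurableSet_Iic
    _ = ENNReal.ofReal (Hfun lam x) := hVlaw x ⟨hx0.le, hx1⟩

theorem toReal_measure_lt_comp_eq_integral (hlam : |lam| ≤ 1) (hV : Measurable V)
    (hU : Measurable U) (hindep : IndepFun V U P)
    (hVlaw : ∀ u ∈ Icc (0:ℝ) 1, P {ω | V ω ≤ u} = ENNReal.ofReal (Hfun lam u))
    (hUlaw : P.map U = volume.restrict (Ioo 0 1)) {g : ℝ → ℝ} (hg : Measurable g)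
    (hg_mem : MapsTo g (Ioo 0 1) (Ioc 0 1)) :
    (P {ω | V ω < g (U ω)}).toReal = ∫ u in (0:ℝ)..1, Hfun lam (g u) := by
  rw [measure_lt_comp_eq_lintegral_map hV hU hindep hg, hUlaw,
    setLIntegral_congr_fun measurableSet_Ioo fun u hu =>
      measure_lt_eq_Hfun hlam hV hVlaw (hg_mem hu).1 (hg_mem hu).2,
    ← integral_toReal (f := fun u => ENNReal.ofReal (Hfun lam (g u)))
      ((Hfun_continuous lam).measurable.comp hg).ennreal_ofReal.aemeasurable
      (ae_of_all _ fun _ => ENNReal.ofReal_lt_top),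
    intervalIntegral.integral_of_le zero_le_one, integral_Ioc_eq_integral_Ioo]
  refine setIntegral_congr_fun measurableSet_Ioo fun u hu => ?_
  exact ENNReal.toReal_ofReal (Hfun_nonneg hlam (hg_mem hu).1.le)

theorem one_sub_toReal_measure_neg_div_comp_le_eq_integral (hlam : |lam| ≤ 1) (hV : Measurable V)
    (hU : Measurable U) (hindep : IndepFun V U P)
    (hVlaw : ∀ u ∈ Icc (0:ℝ) 1, P {ω | V ω ≤ u} = ENNReal.ofReal (Hfun lam u))
    (hUlaw : P.map U = volume.restrict (Ioo 0 1)) {t : ℝ} (ht1 : -1 ≤ t) (ht2 : t < 0)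
    {g : ℝ → ℝ} (hg : Measurable g) (hg_mem : MapsTo g (Ioo 0 1) (Ioo 0 1)) :
    1 - (P {ω | -(V ω) / g (U ω) ≤ t}).toReal = ∫ u in (0:ℝ)..1, Hfun lam (-t * g u) := by
  have hUae : ∀ᵐ ω ∂P, U ω ∈ Ioo 0 1 :=
    ae_of_ae_map hU.aemeasurable (hUlaw ▸ ae_restrict_mem measurableSet_Ioo)
  rw [one_sub_toReal_measure_eq (measurableSet_le (by fun_prop) measurable_const)
    (compl_setOf_neg_div_le_ae_eq (hUae.mono fun ω h => (hg_mem h).1) t)]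
  refine toReal_measure_lt_comp_eq_integral hlam hV hU hindep hVlaw hUlaw (by fun_prop)
    fun u hu => ⟨mul_pos (by linarith) (hg_mem hu).1, ?_⟩
  nlinarith [(hg_mem hu).1, (hg_mem hu).2]

lemma measure_neg_div_le_pos (hlam : |lam| < 1) (hV : Measurable V)
    (hVlaw : ∀ u ∈ Icc (0:ℝ) 1, P {ω | V ω ≤ u} = ENNReal.ofReal (Hfun lam u))
    {W : Ω → ℝ} (hW : ∀ᵐ ω ∂P, W ω ∈ Ioc 0 1) {t : ℝ} (ht1 : -1 < t) (ht2 : t < 0) :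
    0 < P {ω | -(V ω) / W ω ≤ t} := by
  have hlt : P {ω | V ω ≤ -t} < 1 := by
    rw [hVlaw (-t) ⟨by linarith, by linarith⟩, ← ENNReal.ofReal_one,
      ENNReal.ofReal_lt_ofReal_iff one_pos]
    exact Hfun_lt_one hlam (by linarith) (by linarith)
  have hsub : ({ω | V ω ≤ -t}ᶜ : Set Ω) ≤ᵐ[P] {ω | -(V ω) / W ω ≤ t} := by
    filter_upwards [hW] with ω hω (hV : ¬V ω ≤ -t)
    change -(V ω) / W ω ≤ t
    rw [neg_div_le_iff_mul_le hω.1]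
    exact (mul_le_of_le_one_right (by linarith) hω.2).trans (not_le.mp hV).le
  refine lt_of_lt_of_le ?_ (measure_mono_ae hsub)
  rw [prob_compl_eq_one_sub (measurableSet_le hV measurable_const)]
  exact tsub_pos_of_lt hlt

end Probability

theorem stmt18_general {Ω : Type*} [MeasurableSpace Ω] (P : Measure Ω) [IsProbabilityMeasure P]
    (lam : ℝ) (hlam : |lam| ≤ Real.sqrt 2 / 2)
    (V U : Ω → ℝ) (hV : Measurable V) (hU : Measurable U)
    (hindep : ProbabilityTheory.IndepFun V U P)
    (hVlaw : ∀ u ∈ Set.Icc (0:ℝ) 1, P {ω | V ω ≤ u} = ENNReal.ofReal (Hfun lam u))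
    (hUlaw : P.map U = volume.restrict (Set.Ioo 0 1))
    (C : ℝ → ℝ → ℝ)
    (hC : ∀ s t : ℝ,
      P {ω | -(V ω) / U ω ≤ s ∧ -(V ω) / (1 - U ω) ≤ t}
        = ENNReal.ofReal (C (P {ω | -(V ω) / U ω ≤ s}).toReal
            (P {ω | -(V ω) / (1 - U ω) ≤ t}).toReal))
    (t : ℝ) (ht1 : -1 < t) (ht2 : t < 0) :
    (1 - C (P {ω | -(V ω) / U ω ≤ t}).toReal (P {ω | -(V ω) / U ω ≤ t}).toReal) /
        (1 - (P {ω | -(V ω) / U ω ≤ t}).toReal)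
      = 2 * (∫ u in (1/2 : ℝ)..1, Hfun lam (|t| * u)) /
          ∫ u in (0 : ℝ)..1, Hfun lam (|t| * u) := by
  have hlam1 : |lam| < 1 := hlam.trans_lt <| by
    nlinarith [Real.sq_sqrt (show (0:ℝ) ≤ 2 by norm_num), Real.sqrt_nonneg 2]
  have hUae : ∀ᵐ ω ∂P, U ω ∈ Ioo 0 1 :=
    ae_of_ae_map hU.aemeasurable (hUlaw ▸ ae_restrict_mem measurableSet_Ioo)
  have hlaw := fun g hg hg_mem => one_sub_toReal_measure_neg_div_comp_le_eq_integral hlam1.le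
    hV hU hindep hVlaw hUlaw ht1.le ht2 (g := g) hg hg_mem
  have hA : 1 - (P {ω | -(V ω) / U ω ≤ t}).toReal = ∫ u in (0:ℝ)..1, Hfun lam (-t * u) :=
    hlaw id measurable_id (mapsTo_id _)
  have hB : (P {ω | -(V ω) / (1 - U ω) ≤ t}).toReal
      = (P {ω | -(V ω) / U ω ≤ t}).toReal := by
    have := hlaw (fun u => 1 - u) (by fun_prop) fun u hu => ⟨sub_pos.2 hu.2, by linarith [hu.1]⟩
    rw [intervalIntegral.integral_comp_sub_left (fun u => Hfun lam (-t * u)), sub_self,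
      sub_zero] at this
    linarith
  have hAB : P {ω | -(V ω) / U ω ≤ t ∧ -(V ω) / (1 - U ω) ≤ t}
      = P {ω | -(V ω) / max (U ω) (1 - U ω) ≤ t} := by
    refine measure_congr ?_
    filter_upwards [hUae] with ω hω
    exact propext (neg_div_le_and_neg_div_le_iff hω.1 (sub_pos.2 hω.2) ht2.le)
  have hmax : MapsTo (fun u : ℝ => max u (1 - u)) (Ioo 0 1) (Ioo 0 1) := fun u hu =>
    ⟨lt_max_of_lt_left hu.1, max_lt hu.2 (by linarith [hu.1])⟩
  have hJ : 1 - (P {ω | -(V ω) / U ω ≤ t ∧ -(V ω) / (1 - U ω) ≤ t}).toReal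
      = 2 * ∫ u in (1/2 : ℝ)..1, Hfun lam (-t * u) := by
    rw [hAB, hlaw (fun u => max u (1 - u)) (by fun_prop) hmax,
      integral_comp_max_self_one_sub (f := fun u => Hfun lam (-t * u))
        (((Hfun_continuous lam).comp (continuous_const_mul (-t))).intervalIntegrable _ _)]
  have hpos := hAB ▸ measure_neg_div_le_pos hlam1 hV hVlaw
    (hUae.mono fun ω h => Ioo_subset_Ioc_self (hmax h)) ht1 ht2
  rw [hC t t, hB] at hpos hJ
  rw [ENNReal.toReal_ofReal (ENNReal.ofReal_pos.mp hpos).le] at hJ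
  rw [abs_of_neg ht2, hJ, hA]

theorem stmt18 {Ω : Type*} [MeasurableSpace Ω] (P : Measure Ω) [IsProbabilityMeasure P]
    (lam : ℝ) (hlam : |lam| ≤ Real.sqrt 2 / 2) (hlam0 : lam ≠ 0)
    (V U : Ω → ℝ) (hV : Measurable V) (hU : Measurable U)
    (hindep : ProbabilityTheory.IndepFun V U P)
    (hVrange : ∀ ω, V ω ∈ Set.Icc (0:ℝ) 1)
    (hVlaw : ∀ u ∈ Set.Icc (0:ℝ) 1, P {ω | V ω ≤ u} = ENNReal.ofReal (Hfun lam u))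
    (hUlaw : P.map U = volume.restrict (Set.Ioo 0 1))
    (C : ℝ → ℝ → ℝ)
    (hC : ∀ s t : ℝ,
      P {ω | -(V ω) / U ω ≤ s ∧ -(V ω) / (1 - U ω) ≤ t}
        = ENNReal.ofReal (C (P {ω | -(V ω) / U ω ≤ s}).toReal
            (P {ω | -(V ω) / (1 - U ω) ≤ t}).toReal))
    (t : ℝ) (ht1 : -1 < t) (ht2 : t < 0) :
    (1 - C (P {ω | -(V ω) / U ω ≤ t}).toReal (P {ω | -(V ω) / U ω ≤ t}).toReal) /
        (1 - (P {ω | -(V ω) / U ω ≤ t}).toReal)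
      = 2 * (∫ u in (1/2 : ℝ)..1, Hfun lam (|t| * u)) /
          ∫ u in (0 : ℝ)..1, Hfun lam (|t| * u) :=
  stmt18_general P lam hlam V U hV hU hindep hVlaw hUlaw C hC t ht1 ht2
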